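/- Let $\kappa \ge 1$, $0 < q < 1$, $p_a = q^a(1-q)/(1-q^{\kappa+1})$ for $0 \le a \le \kappa$, and $z_a = q^{-a(\kappa+1-a)/2}$ for $0 \le a \le \kappa+1$. Then the equation of state holds: for each $1 \le a \le \kappa$, $z_a \frac{\partial}{\partial z_a} \log\Big(\sum_{b=0}^{\kappa} \frac{z_{b+1}}{z_b}\Big) = \delta_{a,1} - \sum_{b=1}^{\kappa} C_{ab}\,(p_b + p_{b+1} + \cdots + p_\kappa)$, where the left side means: treating $F(z_1,\dots,z_\kappa) = \log\big(\sum_{b=0}^\kappa z_{b+1}/z_b\big)$ with $z_0 = z_{\kappa+1} = 1$ as a function of independent positive variables, evaluate $z_a \partial F/\partial z_a$ at the specialization $z_c = q^{-c(\kappa+1-c)/2}$. -/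

import Mathlib

/-!
Only the terms `z_a/z_{a-1}` and `z_{a+1}/z_a` of `∑_b z_{b+1}/z_b` depend on `z_a`, so
`z_a ∂_a log(∑_b z_{b+1}/z_b) = (z_a/z_{a-1} - z_{a+1}/z_a) / ∑_b z_{b+1}/z_b`. At the principal
specialization `z_{b+1}/z_b = q^b q^{-κ/2}`, so this is `p_{a-1} - p_a`. On the right, with the tail
sums `T_b = p_b + ⋯ + p_κ` (so `T_0 = 1`, `T_{κ+1} = 0`), the Cartan matrix acts as a discrete
Laplacian: `δ_{a,1} - ∑_b C_{ab} T_b = T_{a-1} - 2 T_a + T_{a+1} = p_{a-1} - p_a`.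
-/

/-- Principal specialization `z_a = q^{-a(κ+1-a)/2}` (note `z_0 = z_{κ+1} = 1`). -/
noncomputable def zstar (κ : ℕ) (q : ℝ) (c : ℕ) : ℝ :=
  Real.rpow q (-((c:ℝ) * ((κ:ℝ) + 1 - (c:ℝ))) / 2)

/-- Cartan matrix of `sl_{κ+1}`. -/
def cartan (a b : ℕ) : ℝ :=
  (if a = b then 2 else 0) - (if a + 1 = b then 1 else 0) - (if a = b + 1 then 1 else 0)

open Finset Function

section Cartan

variable {κ m : ℕ}

lemma sum_cartan_mul (T : ℕ → ℝ) (hT : T (κ + 1) = 0) (hm : m + 1 ≤ κ) :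
    ∑ b ∈ Icc 1 κ, cartan (m + 1) b * T b
      = 2 * T (m + 1) - T (m + 2) - T m + if m = 0 then T 0 else 0 := by
  simp only [cartan, sub_mul, ite_mul, one_mul, zero_mul, sum_sub_distrib, sum_ite_eq,
    Nat.add_right_cancel_iff, mem_Icc]
  have h_top : (if 1 ≤ m + 1 + 1 ∧ m + 1 + 1 ≤ κ then T (m + 1 + 1) else 0) = T (m + 2) := by
    split_ifs with h
    · rfl
    · rw [show m + 2 = κ + 1 by omega, hT]
  have h_bot : (if 1 ≤ m ∧ m ≤ κ then T m else 0) = T m - if m = 0 then T 0 else 0 := by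
    rcases Nat.eq_zero_or_pos m with rfl | hm0
    · simp
    · rw [if_pos ⟨hm0, by omega⟩, if_neg hm0.ne', sub_zero]
  rw [h_top, h_bot, if_pos ⟨by omega, hm⟩]
  ring

lemma sum_Icc_sub_sum_Icc_add_one (p : ℕ → ℝ) {b : ℕ} (hb : b ≤ κ) :
    ∑ c ∈ Icc b κ, p c - ∑ c ∈ Icc (b + 1) κ, p c = p b := by
  rw [Icc_add_one_left_eq_Ioc, ← add_sum_Ioc_eq_sum_Icc hb, add_sub_cancel_right]

lemma ite_sub_sum_cartan_mul_tail (p : ℕ → ℝ) (hp : ∑ c ∈ range (κ + 1), p c = 1)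
    (hm : m + 1 ≤ κ) :
    (if m + 1 = 1 then (1 : ℝ) else 0) - ∑ b ∈ Icc 1 κ, cartan (m + 1) b * ∑ c ∈ Icc b κ, p c
      = p m - p (m + 1) := by
  have hT0 : ∑ c ∈ Icc 0 κ, p c = 1 := by rwa [← Nat.range_succ_eq_Icc_zero]
  have hpm := sum_Icc_sub_sum_Icc_add_one p (by omega : m ≤ κ)
  have hpm1 : ∑ c ∈ Icc (m + 1) κ, p c - ∑ c ∈ Icc (m + 2) κ, p c = p (m + 1) :=
    sum_Icc_sub_sum_Icc_add_one p hm
  rw [sum_cartan_mul (fun b ↦ ∑ c ∈ Icc b κ, p c) (by simp) hm]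
  rcases Nat.eq_zero_or_pos m with rfl | hm0
  · simp only [if_true]
    linear_combination hpm - hpm1 - hT0
  · simp only [hm0.ne', if_false, Nat.add_eq_right]
    linear_combination hpm - hpm1

end Cartan

section RatioSum

/-- The paper's `F` is `log (ratioSum κ (update z a t))`, the variable `t` standing for `z_a`. -/
noncomputable def ratioSum (κ : ℕ) (z : ℕ → ℝ) : ℝ := ∑ b ∈ range (κ + 1), z (b + 1) / z b

variable {κ m : ℕ} {z : ℕ → ℝ}

lemma ratioSum_pos (hz : ∀ c, 0 < z c) : 0 < ratioSum κ z :=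
  sum_pos (fun _ _ ↦ div_pos (hz _) (hz _)) nonempty_range_add_one

lemma ratioSum_update (hm : m + 1 ≤ κ) (t : ℝ) :
    ratioSum κ (update z (m + 1) t)
      = ratioSum κ z - z (m + 1) / z m - z (m + 2) / z (m + 1) + t / z m + z (m + 2) / t := by
  have hterm : ∀ b, update z (m + 1) t (b + 1) / update z (m + 1) t b
      = z (b + 1) / z b + (if m = b then t / z m - z (m + 1) / z m else 0)
        + (if m + 1 = b then z (m + 2) / t - z (m + 2) / z (m + 1) else 0) := by
    intro b
    by_cases hb : m = b
    · subst hb; simp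
    by_cases hb' : m + 1 = b
    · subst hb'; simp
    · simp [hb, hb', Ne.symm hb, Ne.symm hb']
  simp only [ratioSum, hterm, sum_add_distrib, sum_ite_eq, mem_range,
    if_pos (by omega : m < κ + 1), if_pos (by omega : m + 1 < κ + 1)]
  ring

lemma hasDerivAt_log_ratioSum_update (hz : ∀ c, 0 < z c) (hm : m + 1 ≤ κ) :
    HasDerivAt (fun t ↦ Real.log (ratioSum κ (update z (m + 1) t)))
      ((1 / z m - z (m + 2) / z (m + 1) ^ 2) / ratioSum κ z) (z (m + 1)) := by
  have hinner : HasDerivAt (fun t ↦ ratioSum κ (update z (m + 1) t))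
      (1 / z m - z (m + 2) / z (m + 1) ^ 2) (z (m + 1)) := by
    simp only [ratioSum_update hm]
    have hlin := ((hasDerivAt_id' (z (m + 1))).div_const (z m)).const_add
      (ratioSum κ z - z (m + 1) / z m - z (m + 2) / z (m + 1))
    have hrec := (hasDerivAt_const (z (m + 1)) (z (m + 2))).div (hasDerivAt_id' _) (hz (m + 1)).ne'
    exact (hlin.add hrec).congr_deriv (by ring)
  have hlog := hinner.log (by rw [update_eq_self]; exact (ratioSum_pos hz).ne')
  rwa [update_eq_self] at hlog

lemma mul_deriv_log_ratioSum_update (hz : ∀ c, 0 < z c) (hm : m + 1 ≤ κ) :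
    z (m + 1) * deriv (fun t ↦ Real.log (ratioSum κ (update z (m + 1) t))) (z (m + 1))
      = (z (m + 1) / z m - z (m + 2) / z (m + 1)) / ratioSum κ z := by
  rw [(hasDerivAt_log_ratioSum_update hz hm).deriv]
  have := (hz m).ne'
  have := (hz (m + 1)).ne'
  field_simp

end RatioSum

section Specialization

variable {κ : ℕ} {q : ℝ}

lemma zstar_pos (hq : 0 < q) (c : ℕ) : 0 < zstar κ q c := Real.rpow_pos_of_pos hq _

lemma zstar_succ_div (hq : 0 < q) (b : ℕ) :
    zstar κ q (b + 1) / zstar κ q b = q ^ b * q ^ (-(κ : ℝ) / 2) := by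
  simp only [zstar, Real.rpow_eq_pow]
  rw [← Real.rpow_sub hq, ← Real.rpow_natCast, ← Real.rpow_add hq]
  congr 1
  push_cast
  ring

lemma ratioSum_zstar (hq : 0 < q) :
    ratioSum κ (zstar κ q) = (∑ b ∈ range (κ + 1), q ^ b) * q ^ (-(κ : ℝ) / 2) := by
  simp only [ratioSum, zstar_succ_div hq, sum_mul]

end Specialization

theorem stmt19_general (κ : ℕ) (q : ℝ) (hq0 : 0 < q) (hq1 : q < 1)
    (a : ℕ) (ha1 : 1 ≤ a) (ha2 : a ≤ κ) :
    zstar κ q a * deriv (fun t : ℝ =>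
        Real.log (∑ b ∈ Finset.range (κ+1),
          (if b + 1 = a then t else zstar κ q (b+1)) /
          (if b = a then t else zstar κ q b)))
      (zstar κ q a)
    = (if a = 1 then (1:ℝ) else 0) -
        ∑ b ∈ Finset.Icc 1 κ, cartan a b *
          ∑ c ∈ Finset.Icc b κ, q ^ c * (1-q) / (1 - q ^ (κ+1)) := by
  obtain ⟨m, rfl⟩ : ∃ m, a = m + 1 := ⟨a - 1, by omega⟩
  have hgeom : ∑ b ∈ range (κ + 1), q ^ b = (1 - q ^ (κ + 1)) / (1 - q) := by
    rw [geom_sum_eq hq1.ne, ← neg_div_neg_eq, neg_sub, neg_sub]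
  have hq1' : 1 - q ≠ 0 := by linarith
  have hqκ : 1 - q ^ (κ + 1) ≠ 0 := (sub_pos.2 (pow_lt_one₀ hq0.le hq1 (by omega))).ne'
  have hweights : ∑ c ∈ range (κ + 1), q ^ c * (1 - q) / (1 - q ^ (κ + 1)) = 1 := by
    rw [← sum_div, ← sum_mul, hgeom]
    field_simp
  have hF : (fun t ↦ Real.log (∑ b ∈ range (κ + 1),
      (if b + 1 = m + 1 then t else zstar κ q (b + 1)) / (if b = m + 1 then t else zstar κ q b)))
      = fun t ↦ Real.log (ratioSum κ (update (zstar κ q) (m + 1) t)) := by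
    funext t
    simp only [ratioSum, update_apply]
  rw [hF, mul_deriv_log_ratioSum_update (zstar_pos hq0) ha2, show m + 2 = m + 1 + 1 from rfl,
    zstar_succ_div hq0, zstar_succ_div hq0, ratioSum_zstar hq0, hgeom,
    ite_sub_sum_cartan_mul_tail _ hweights ha2]
  have := (Real.rpow_pos_of_pos hq0 (-(κ : ℝ) / 2)).ne'
  field_simp

theorem stmt19 (κ : ℕ) (hκ : 1 ≤ κ) (q : ℝ) (hq0 : 0 < q) (hq1 : q < 1)
    (a : ℕ) (ha1 : 1 ≤ a) (ha2 : a ≤ κ) :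
    zstar κ q a * deriv (fun t : ℝ =>
        Real.log (∑ b ∈ Finset.range (κ+1),
          (if b + 1 = a then t else zstar κ q (b+1)) /
          (if b = a then t else zstar κ q b)))
      (zstar κ q a)
    = (if a = 1 then (1:ℝ) else 0) -
        ∑ b ∈ Finset.Icc 1 κ, cartan a b *
          ∑ c ∈ Finset.Icc b κ, q ^ c * (1-q) / (1 - q ^ (κ+1)) :=
  stmt19_general κ q hq0 hq1 a ha1 ha2
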